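/- Let G be a finite group whose non-nilpotent graph restricted to G \ nil(G) is regular (all nontrivial elements outside nil(G) have nilpotentizers of the same cardinality), with nil(G) = 1 and G non-nilpotent. Then for every nontrivial a ∈ G and every i with 1 ≤ i ≤ |a| − 1, nil_G(a) = nil_G(aⁱ). -/

import Mathlib

def nilizer {G : Type*} [Group G] (x : G) : Set G :=
  {g | Group.IsNilpotent (Subgroup.closure ({x, g} : Set G))}

def nilSet (G : Type*) [Group G] : Set G :=
  {x | ∀ y : G, Group.IsNilpotent (Subgroup.closure ({x, y} : Set G))}

theorem Subgroup.isNilpotent_of_le {G : Type*} [Group G] {H K : Subgroup G} (hle : H ≤ K)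
    [Group.IsNilpotent K] : Group.IsNilpotent H :=
  Group.nilpotent_of_mulEquiv (Subgroup.subgroupOfEquivOfLe hle)

theorem nilizer_subset_nilizer_of_mem_zpowers {G : Type*} [Group G] {a b : G}
    (hb : b ∈ Subgroup.zpowers a) : nilizer a ⊆ nilizer b := by
  intro g (hg : Group.IsNilpotent (Subgroup.closure ({a, g} : Set G)))
  have hle : Subgroup.closure ({b, g} : Set G) ≤ Subgroup.closure ({a, g} : Set G) := by
    rw [Subgroup.closure_le]
    rintro x (rfl | rfl)
    · exact Subgroup.zpowers_le.mpr (Subgroup.subset_closure (by simp)) hb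
    · exact Subgroup.subset_closure (by simp)
  exact Subgroup.isNilpotent_of_le hle

theorem stmt13_general {G : Type*} [Group G] [Finite G]
    (hreg : ∀ x y : G, x ≠ 1 → y ≠ 1 → (nilizer x).ncard = (nilizer y).ncard) :
    ∀ a : G, a ≠ 1 → ∀ i : ℕ, 1 ≤ i → i ≤ orderOf a - 1 → nilizer a = nilizer (a ^ i) := by
  intro a ha i hi1 hi2
  have hpow : a ^ i ≠ 1 :=
    pow_ne_one_of_lt_orderOf (by omega) (by have := orderOf_pos a; omega)
  exact Set.eq_of_subset_of_ncard_le
    (nilizer_subset_nilizer_of_mem_zpowers (Subgroup.npow_mem_zpowers a i))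
    (hreg (a ^ i) a hpow ha).le (Set.toFinite _)

theorem stmt13 {G : Type*} [Group G] [Finite G]
    (hnn : ¬ Group.IsNilpotent G) (hnil : nilSet G = {1})
    (hreg : ∀ x y : G, x ≠ 1 → y ≠ 1 → (nilizer x).ncard = (nilizer y).ncard) :
    ∀ a : G, a ≠ 1 → ∀ i : ℕ, 1 ≤ i → i ≤ orderOf a - 1 → nilizer a = nilizer (a ^ i) :=
  stmt13_general hreg
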